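/- Let D be a tournament on n vertices and let π arrange the vertices of D in non-increasing order of out-degree. Then for every k with 1 ≤ k ≤ n−1, the cut of π after position k has maximum size among all directed cuts E(X,Y) of D with |X| = k; consequently π is a maximum arrangement and val_D(π) = MaxDLA(D). -/

import Mathlib

/-!
In a tournament the vertices of `X` span exactly `(#X).choose 2` edges, so
`dicut E X = ∑ v ∈ X, outdeg E v - (#X).choose 2`. For `#X = k` fixed, the sum of out-degrees is
largest on the first `k` vertices of `π`, so every cut of `π` is a maximum directed cut of its
size. Since the value of an arrangement is the sum of the sizes of its cuts, `π` is a maximum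
arrangement.
-/

open Finset

/-- Integer value of an edge under an arrangement: max {0, π(head) − π(tail)}. -/
def edgeVal {n : ℕ} (π : Equiv.Perm (Fin n)) (e : Fin n × Fin n) : ℤ :=
  max 0 ((π e.2 : ℤ) - (π e.1 : ℤ))

/-- Value of an arrangement (integer version). -/
def arrVal {n : ℕ} (E : Finset (Fin n × Fin n)) (π : Equiv.Perm (Fin n)) : ℤ :=
  ∑ e ∈ E, edgeVal π e

/-- Value of an arrangement (natural-number version, using truncated subtraction). -/
def valN {n : ℕ} (E : Finset (Fin n × Fin n)) (π : Equiv.Perm (Fin n)) : ℕ :=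
  ∑ e ∈ E, ((π e.2 : ℕ) - (π e.1 : ℕ))

/-- Size of the k-th cut of an arrangement (positions are 0-indexed, cuts 1-indexed:
`cutAt E π k` counts edges from the first k vertices to the rest). -/
def cutAt {n : ℕ} (E : Finset (Fin n × Fin n)) (π : Equiv.Perm (Fin n)) (k : ℕ) : ℕ :=
  (E.filter (fun e => (π e.1 : ℕ) < k ∧ k ≤ (π e.2 : ℕ))).card

def outdeg {n : ℕ} (E : Finset (Fin n × Fin n)) (v : Fin n) : ℕ :=
  (E.filter (fun e => e.1 = v)).card

def indeg {n : ℕ} (E : Finset (Fin n × Fin n)) (v : Fin n) : ℕ :=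
  (E.filter (fun e => e.2 = v)).card

/-- Number of edges in the directed cut from X to its complement. -/
def dicut {n : ℕ} (E : Finset (Fin n × Fin n)) (X : Finset (Fin n)) : ℕ :=
  (E.filter (fun e => e.1 ∈ X ∧ e.2 ∉ X)).card

/-- Maximum value of an arrangement of E. -/
def maxDLA {n : ℕ} (E : Finset (Fin n × Fin n)) : ℕ :=
  (univ : Finset (Equiv.Perm (Fin n))).sup (valN E)

namespace Finset

variable {ι M : Type*} [AddCommMonoid M] [LinearOrder M] [IsOrderedAddMonoid M]

theorem sum_le_sum_of_card_eq_of_forall_le {A B : Finset ι} (f : ι → M) (hcard : #A = #B)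
    (h : ∀ a ∈ A, ∀ b ∈ B, f a ≤ f b) : ∑ a ∈ A, f a ≤ ∑ b ∈ B, f b := by
  obtain rfl | hA := A.eq_empty_or_nonempty
  · simp [card_eq_zero.mp hcard.symm]
  calc ∑ a ∈ A, f a ≤ #A • A.sup' hA f := sum_le_card_nsmul _ _ _ fun a ha => le_sup' f ha
    _ = #B • A.sup' hA f := by rw [hcard]
    _ ≤ ∑ b ∈ B, f b :=
      card_nsmul_le_sum _ _ _ fun b hb => (sup'_le_iff hA f).2 fun a ha => h a ha b hb

theorem sum_le_sum_of_card_eq_of_forall_sdiff_le [DecidableEq ι] {A B : Finset ι} (f : ι → M)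
    (hcard : #A = #B) (h : ∀ a ∈ A \ B, ∀ b ∈ B \ A, f a ≤ f b) :
    ∑ a ∈ A, f a ≤ ∑ b ∈ B, f b := by
  rw [← sum_inter_add_sum_sdiff A B, ← sum_inter_add_sum_sdiff B A, inter_comm]
  exact add_le_add_right (sum_le_sum_of_card_eq_of_forall_le f (card_sdiff_comm hcard) h) _

end Finset

section Digraph

variable {n : ℕ} (E : Finset (Fin n × Fin n))

theorem sum_outdeg_eq_card_filter_fst_mem (X : Finset (Fin n)) :
    ∑ v ∈ X, outdeg E v = #(E.filter fun e => e.1 ∈ X) := by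
  rw [card_eq_sum_card_fiberwise (f := Prod.fst) (s := E.filter fun e => e.1 ∈ X) (t := X)
    fun e he => (mem_filter.mp he).2]
  refine sum_congr rfl fun v hv => congrArg card ?_
  ext e
  simp only [mem_filter]
  grind

theorem card_filter_fst_mem_eq_dicut_add (X : Finset (Fin n)) :
    #(E.filter fun e => e.1 ∈ X) = dicut E X + #(E.filter fun e => e.1 ∈ X ∧ e.2 ∈ X) := by
  rw [dicut, ← card_filter_add_card_filter_not (fun e => e.2 ∈ X), filter_filter, filter_filter,
    add_comm]

theorem card_filter_mem_mem_eq_choose_two (hloop : ∀ v : Fin n, (v, v) ∉ E)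
    (htour : ∀ u v : Fin n, u ≠ v → ((u, v) ∈ E ↔ (v, u) ∉ E)) (X : Finset (Fin n)) :
    #(E.filter fun e => e.1 ∈ X ∧ e.2 ∈ X) = (#X).choose 2 := by
  set A := E.filter fun e => e.1 ∈ X ∧ e.2 ∈ X
  have hdisj : Disjoint A (A.image Prod.swap) := by
    rw [disjoint_left]
    rintro ⟨u, v⟩ huv hvu
    simp only [A, mem_image, mem_filter, Prod.exists, Prod.swap_prod_mk, Prod.mk.injEq] at huv hvu
    grind
  have hunion : A ∪ A.image Prod.swap = X.offDiag := by
    ext ⟨u, v⟩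
    simp only [A, mem_union, mem_image, mem_filter, mem_offDiag, Prod.exists, Prod.swap_prod_mk,
      Prod.mk.injEq]
    grind
  have := card_union_of_disjoint hdisj
  rw [hunion, offDiag_card, card_image_of_injective _ Prod.swap_injective] at this
  rw [Nat.choose_two_right, Nat.mul_sub_one, this]
  omega

end Digraph

def arrPrefix {n : ℕ} (σ : Equiv.Perm (Fin n)) (k : ℕ) : Finset (Fin n) :=
  univ.filter fun v => (σ v : ℕ) < k

section Arrangement

variable {n : ℕ} (E : Finset (Fin n × Fin n))

theorem card_arrPrefix (σ : Equiv.Perm (Fin n)) {k : ℕ} (hk : k ≤ n) : #(arrPrefix σ k) = k := by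
  have : arrPrefix σ k = (univ.filter fun i : Fin n => (i : ℕ) < k).map σ.symm.toEmbedding := by
    ext v
    simp [arrPrefix]
  rw [this, card_map, Fin.card_filter_val_lt, min_eq_right hk]

theorem cutAt_eq_dicut_arrPrefix (σ : Equiv.Perm (Fin n)) (k : ℕ) :
    cutAt E σ k = dicut E (arrPrefix σ k) := by
  simp [cutAt, dicut, arrPrefix]

theorem valN_eq_sum_cutAt (σ : Equiv.Perm (Fin n)) :
    valN E σ = ∑ k ∈ Icc 1 (n - 1), cutAt E σ k := by
  have hedge : ∀ e ∈ E, (σ e.2 : ℕ) - σ e.1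
      = #((Icc 1 (n - 1)).filter fun k => (σ e.1 : ℕ) < k ∧ k ≤ σ e.2) := by
    intro e _
    have : (Icc 1 (n - 1)).filter (fun k => (σ e.1 : ℕ) < k ∧ k ≤ σ e.2) = Ioc (σ e.1 : ℕ) (σ e.2) := by
      ext k
      simp only [mem_filter, mem_Icc, mem_Ioc]
      omega
    rw [this, Nat.card_Ioc]
  simp_rw [valN, cutAt, sum_congr rfl hedge, card_filter]
  exact sum_comm

theorem sum_outdeg_le_sum_outdeg_arrPrefix (π : Equiv.Perm (Fin n))
    (hsort : ∀ u v : Fin n, (π u : ℕ) ≤ (π v : ℕ) → outdeg E v ≤ outdeg E u)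
    (X : Finset (Fin n)) :
    ∑ v ∈ X, outdeg E v ≤ ∑ v ∈ arrPrefix π #X, outdeg E v := by
  refine sum_le_sum_of_card_eq_of_forall_sdiff_le _
    (card_arrPrefix π (by simpa using card_le_univ X)).symm fun x hx y hy => hsort y x ?_
  simp only [arrPrefix, mem_sdiff, mem_filter, mem_univ, true_and] at hx hy
  omega

theorem dicut_add_choose_two (hloop : ∀ v : Fin n, (v, v) ∉ E)
    (htour : ∀ u v : Fin n, u ≠ v → ((u, v) ∈ E ↔ (v, u) ∉ E)) (X : Finset (Fin n)) :
    dicut E X + (#X).choose 2 = ∑ v ∈ X, outdeg E v := by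
  rw [sum_outdeg_eq_card_filter_fst_mem, card_filter_fst_mem_eq_dicut_add,
    card_filter_mem_mem_eq_choose_two E hloop htour]

theorem dicut_le_cutAt_card (hloop : ∀ v : Fin n, (v, v) ∉ E)
    (htour : ∀ u v : Fin n, u ≠ v → ((u, v) ∈ E ↔ (v, u) ∉ E)) (π : Equiv.Perm (Fin n))
    (hsort : ∀ u v : Fin n, (π u : ℕ) ≤ (π v : ℕ) → outdeg E v ≤ outdeg E u)
    (X : Finset (Fin n)) : dicut E X ≤ cutAt E π #X := by
  have hX := dicut_add_choose_two E hloop htour X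
  have hπ := dicut_add_choose_two E hloop htour (arrPrefix π #X)
  rw [card_arrPrefix π (by simpa using card_le_univ X)] at hπ
  have := sum_outdeg_le_sum_outdeg_arrPrefix E π hsort X
  rw [cutAt_eq_dicut_arrPrefix]
  omega

end Arrangement

/-- in a tournament arranged by non-increasing out-degree, every cut of
the arrangement is a maximum directed cut for its cardinality; consequently the
arrangement is maximum and its value is MaxDLA(D). -/
theorem stmt15 (n : ℕ) (E : Finset (Fin n × Fin n))
    (hloop : ∀ v : Fin n, (v, v) ∉ E)
    (htour : ∀ u v : Fin n, u ≠ v → ((u, v) ∈ E ↔ (v, u) ∉ E))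
    (π : Equiv.Perm (Fin n))
    (hsort : ∀ u v : Fin n, (π u : ℕ) ≤ (π v : ℕ) → outdeg E v ≤ outdeg E u) :
    (∀ k ∈ Icc 1 (n - 1), ∀ X : Finset (Fin n), X.card = k → dicut E X ≤ cutAt E π k) ∧
    (∀ σ : Equiv.Perm (Fin n), valN E σ ≤ valN E π) ∧
    valN E π = maxDLA E := by
  have hcut : ∀ k ∈ Icc 1 (n - 1), ∀ X : Finset (Fin n), #X = k → dicut E X ≤ cutAt E π k := by
    rintro k - X rfl
    exact dicut_le_cutAt_card E hloop htour π hsort X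
  have hmax : ∀ σ : Equiv.Perm (Fin n), valN E σ ≤ valN E π := by
    intro σ
    rw [valN_eq_sum_cutAt, valN_eq_sum_cutAt]
    refine sum_le_sum fun k hk => ?_
    rw [cutAt_eq_dicut_arrPrefix E σ]
    exact hcut k hk _ (card_arrPrefix σ (by grind))
  exact ⟨hcut, hmax, le_antisymm (le_sup (mem_univ π)) (Finset.sup_le fun σ _ => hmax σ)⟩
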